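/- Let x ∈ M and suppose that for some sequence n₁ < n₂ < … the empirical measures (1/n_k)Σ_{j=0}^{n_k−1} δ_{f_t^j x} converge weak* to an ergodic stationary measure μ_i for t in a set W_i(x) ⊆ supp(θ^ℕ). Define W_{i,j}(x) = {t ∈ supp(θ^ℕ) : f_t^j x ∈ int B(μ_i)}, where B(μ_i) is the ergodic basin of μ_i and every point of int(supp μ_i) lies in B(μ_i) with int B(μ_i) ⊇ int(supp μ_i) open and visited by orbits generating μ_i. Then W_i(x) = ⋃_{j≥1} W_{i,j}(x) modulo a θ^ℕ-null set; in particular W_i(x) does not depend on the chosen subsequence (n_k). -/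

import Mathlib

open MeasureTheory Filter Topology

/-- Random orbit: `rorb Φ x n t = f_{t_{n-1}} ∘ ⋯ ∘ f_{t_0} (x)`. -/
def rorb {M : Type*} [TopologicalSpace M] (Φ : ℝ → C(M, M)) (x : M) :
    ℕ → (ℕ → ℝ) → M
  | 0, _ => x
  | n + 1, t => (Φ (t n)) (rorb Φ x n t)

def msupport {X : Type*} [TopologicalSpace X] [MeasurableSpace X]
    (μ : Measure X) : Set X :=
  {x | ∀ U : Set X, IsOpen U → x ∈ U → 0 < μ U}

/-- Weak* convergence of the empirical measures of the random orbit of `x`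
driven by `t`, along a subsequence `nk`, to `ν`. -/
def empConvAlong {M : Type*} [TopologicalSpace M] [MeasurableSpace M]
    (Φ : ℝ → C(M, M)) (x : M) (t : ℕ → ℝ) (nk : ℕ → ℕ) (ν : Measure M) :
    Prop :=
  ∀ g : C(M, ℝ),
    Tendsto (fun k => (nk k : ℝ)⁻¹ *
        ∑ j ∈ Finset.range (nk k), g (rorb Φ x j t))
      atTop (nhds (∫ y, g y ∂ν))

/-- The ergodic basin `B(ν)` of `ν`: points whose empirical measures converge
weak* to `ν` for almost every noise realization. -/
def basinM {M : Type*} [TopologicalSpace M] [MeasurableSpace M]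
    (Φ : ℝ → C(M, M)) (P : Measure (ℕ → ℝ)) (ν : Measure M) : Set M :=
  {y | ∀ᵐ t ∂P, empConvAlong Φ y t (fun n => n) ν}

open ProbabilityTheory Set

/-!
If the empirical measures of `x` along `t` converge to `μ` (along any subsequence), testing them
against a continuous function that is positive exactly on `U = int supp μ` shows that the orbit
enters `U ⊆ int B(μ)` at some positive time. Conversely, `f_t^j x` depends only on
`t_0, …, t_{j-1}`, hence is independent of the shifted noise `(t_{j+i})_i`, which again has law
`θ^ℕ`; so if `f_t^j x ∈ int B(μ)`, then for almost every continuation the orbit of `f_t^j x`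
generates `μ`, and dropping the first `j` terms of a Cesàro average does not change its limit.
Both directions go through the skew product `(y, t) ↦ (f_{t_0} y, σ t)`, whose Birkhoff
averages of `g ∘ Prod.fst` are the empirical averages.
-/

section Birkhoff

variable {α E : Type*} {𝕜 : Type*} [RCLike 𝕜] [NormedAddCommGroup E] [NormedSpace 𝕜 E]
  {f : α → α} {g : α → E}

theorem tendsto_birkhoffAverage_of_tendsto_iterate (hg : Bornology.IsBounded (range g))
    {x : α} {l : E} (m : ℕ)
    (h : Tendsto (birkhoffAverage 𝕜 f g · (f^[m] x)) atTop (𝓝 l)) :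
    Tendsto (birkhoffAverage 𝕜 f g · x) atTop (𝓝 l) := by
  induction m generalizing x with
  | zero => exact h
  | succ m ih =>
    have hfx := ih (x := f x) (by rwa [← Function.iterate_succ_apply])
    simpa using hfx.sub (tendsto_birkhoffAverage_apply_sub_birkhoffAverage' 𝕜 hg f x)

theorem dist_birkhoffAverage_le_of_forall_dist_le {g' : α → E} {C : ℝ}
    (h : ∀ y, dist (g y) (g' y) ≤ C) (n : ℕ) (x : α) :
    dist (birkhoffAverage 𝕜 f g n x) (birkhoffAverage 𝕜 f g' n x) ≤ C := by
  rcases n.eq_zero_or_pos with rfl | hn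
  · simpa using dist_nonneg.trans (h x)
  calc dist (birkhoffAverage 𝕜 f g n x) (birkhoffAverage 𝕜 f g' n x)
      = dist (birkhoffSum f g n x) (birkhoffSum f g' n x) / n := by
        simp [birkhoffAverage, dist_smul₀, div_eq_inv_mul]
    _ ≤ (∑ _k ∈ Finset.range n, C) / n := by
        gcongr
        exact (dist_sum_sum_le _ _ _).trans (Finset.sum_le_sum fun k _ => h _)
    _ = C := by
        rw [Finset.sum_const, Finset.card_range, nsmul_eq_mul,
          mul_div_cancel_left₀ _ (Nat.cast_ne_zero.2 hn.ne')]

end Birkhoff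

section Bernoulli

variable {α : Type*} [MeasurableSpace α] {μ : Measure α} [IsProbabilityMeasure μ]

theorem eq_infinitePi_of_map_fin {P : Measure (ℕ → α)} [IsProbabilityMeasure P]
    (hP : ∀ n : ℕ, P.map (fun t (i : Fin n) => t i) = Measure.pi fun _ => μ) :
    P = Measure.infinitePi fun _ => μ := by
  refine Measure.eq_infinitePi _ fun s A hA => ?_
  obtain ⟨n, hn⟩ : ∃ n, s ⊆ Finset.range n := ⟨s.sup id + 1, fun i hi =>
    Finset.mem_range.2 (Nat.lt_succ_of_le (Finset.le_sup (f := id) hi))⟩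
  have hpre : (s : Set ℕ).pi A = (fun t (i : Fin n) => t i) ⁻¹'
      univ.pi fun i : Fin n => if (i : ℕ) ∈ s then A i else univ := by
    ext t
    simp only [Set.mem_pi, Finset.mem_coe, mem_preimage, mem_univ, true_implies]
    refine ⟨fun ht i => ?_, fun ht i hi => ?_⟩
    · split_ifs with hi
      · exact ht i hi
      · trivial
    · simpa [hi] using ht ⟨i, Finset.mem_range.1 (hn hi)⟩
  rw [hpre, ← Measure.map_apply (by fun_prop) (.univ_pi fun i => by split_ifs <;> simp [hA]),
    hP, Measure.pi_pi, Fin.prod_univ_eq_prod_range (fun i => μ (if i ∈ s then A i else univ))]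
  simp only [apply_ite μ, measure_univ]
  rw [Finset.prod_ite_mem, Finset.inter_eq_right.2 hn]

abbrev piLT (α : Type*) [MeasurableSpace α] (n : ℕ) : MeasurableSpace (ℕ → α) :=
  ⨆ i ∈ Iio n, MeasurableSpace.comap (fun t : ℕ → α => t i) ‹_›

theorem piLT_le (n : ℕ) : piLT α n ≤ MeasurableSpace.pi :=
  iSup₂_le fun i _ => (measurable_pi_apply i).comap_le

theorem piLT_mono : Monotone (piLT α) :=
  fun _ _ hmn => biSup_mono fun _ hi => lt_of_lt_of_le hi hmn

theorem measurable_piLT_apply {i n : ℕ} (hi : i < n) : Measurable[piLT α n] fun t => t i :=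
  Measurable.of_comap_le
    (le_biSup (fun j => MeasurableSpace.comap (fun t : ℕ → α => t j) ‹_›)
      (show i ∈ Iio n from hi))

theorem indep_piLT_comap_shift_infinitePi (m : ℕ) :
    Indep (piLT α m)
      (MeasurableSpace.comap (fun t : ℕ → α => fun i => t (i + m)) MeasurableSpace.pi)
      (Measure.infinitePi fun _ => μ) := by
  have hcoord : iIndep (fun i => MeasurableSpace.comap (fun t : ℕ → α => t i) ‹_›)
      (Measure.infinitePi fun _ => μ) :=
    (iIndepFun_infinitePi (X := fun _ a => a) fun _ => measurable_id).iIndep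
  refine indep_of_indep_of_le_right (indep_iSup_of_disjoint
    (fun i => (measurable_pi_apply i).comap_le) hcoord (T := Ici m)
    (Iio_disjoint_Ici le_rfl)) ?_
  rw [MeasurableSpace.pi, MeasurableSpace.comap_iSup]
  refine iSup_le fun i => ?_
  rw [MeasurableSpace.comap_comp]
  exact le_biSup (fun j => MeasurableSpace.comap (fun t : ℕ → α => t j) _)
    (show i + m ∈ Ici m from Nat.le_add_left m i)

theorem map_prod_shift_infinitePi {β : Type*} [MeasurableSpace β] {Y : (ℕ → α) → β}
    {m : ℕ} (hY : Measurable[piLT α m] Y) :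
    (Measure.infinitePi fun _ => μ).map (fun t => (Y t, fun i => t (i + m)))
      = ((Measure.infinitePi fun _ => μ).map Y).prod (Measure.infinitePi fun _ => μ) := by
  have hindep : IndepFun Y (fun t i => t (i + m)) (Measure.infinitePi fun _ => μ) :=
    (IndepFun_iff_Indep _ _ _).2
      (indep_of_indep_of_le_left (indep_piLT_comap_shift_infinitePi m) hY.comap_le)
  rw [hindep.map_prod_eq_prod_map_map (hY.mono (piLT_le m) le_rfl).aemeasurable
    (measurable_pi_lambda _ fun i => measurable_pi_apply _).aemeasurable,
    Measure.map_infinitePi_infinitePi_of_inj (add_left_injective m)]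

end Bernoulli

section RandomOrbit

variable {M : Type*} [TopologicalSpace M] (Φ : ℝ → C(M, M))

def skewProduct (p : M × (ℕ → ℝ)) : M × (ℕ → ℝ) :=
  (Φ (p.2 0) p.1, fun i => p.2 (i + 1))

theorem skewProduct_iterate (n : ℕ) (y : M) (t : ℕ → ℝ) :
    (skewProduct Φ)^[n] (y, t) = (rorb Φ y n t, fun i => t (i + n)) := by
  induction n with
  | zero => rfl
  | succ n ih =>
    rw [Function.iterate_succ_apply', ih]
    simp only [skewProduct, zero_add, rorb, Prod.mk.injEq, true_and]
    funext i
    rw [add_right_comm, add_assoc]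

theorem birkhoffAverage_skewProduct (g : M → ℝ) (n : ℕ) (y : M) (t : ℕ → ℝ) :
    birkhoffAverage ℝ (skewProduct Φ) (g ∘ Prod.fst) n (y, t)
      = (n : ℝ)⁻¹ * ∑ j ∈ Finset.range n, g (rorb Φ y j t) := by
  simp [birkhoffAverage, birkhoffSum, skewProduct_iterate]

theorem empConvAlong_iff_tendsto_birkhoffAverage [MeasurableSpace M] {y : M} {t : ℕ → ℝ}
    {nk : ℕ → ℕ} {ν : Measure M} :
    empConvAlong Φ y t nk ν ↔ ∀ g : C(M, ℝ), Tendsto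
      (fun k => birkhoffAverage ℝ (skewProduct Φ) (g ∘ Prod.fst) (nk k) (y, t))
      atTop (𝓝 (∫ z, g z ∂ν)) := by
  simp only [birkhoffAverage_skewProduct, empConvAlong]

variable {Φ} [LocallyCompactSpace M]

theorem continuous_skewProduct (hΦ : Continuous Φ) : Continuous (skewProduct Φ) := by
  have hΦ' : Continuous fun p : M × (ℕ → ℝ) => Φ (p.2 0) p.1 :=
    ContinuousEval.continuous_eval.comp
      ((hΦ.comp ((continuous_apply 0).comp continuous_snd)).prodMk continuous_fst)
  exact hΦ'.prodMk (continuous_pi fun i => (continuous_apply (i + 1)).comp continuous_snd)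

theorem measurable_rorb_piLT [MeasurableSpace M] [BorelSpace M] (hΦ : Continuous Φ)
    (x : M) (n : ℕ) :
    Measurable[piLT ℝ n] (rorb Φ x n) := by
  have hΦ' : Measurable fun q : ℝ × M => Φ q.1 q.2 :=
    (ContinuousEval.continuous_eval.comp (hΦ.prodMap continuous_id)).measurable
  induction n with
  | zero => exact measurable_const
  | succ n ih =>
    exact hΦ'.comp ((measurable_piLT_apply n.lt_succ_self).prodMk
      (ih.mono (piLT_mono n.le_succ) le_rfl))

end RandomOrbit

section Metric

variable {M : Type*} [MetricSpace M] [CompactSpace M] [MeasurableSpace M]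
  {Φ : ℝ → C(M, M)} {μ : Measure M}

theorem integrable_continuousMap [BorelSpace M] [IsFiniteMeasure μ] (g : C(M, ℝ)) :
    Integrable g μ :=
  g.continuous.integrable_of_hasCompactSupport (HasCompactSupport.of_compactSpace g)

theorem lipschitzWith_integral_continuousMap [BorelSpace M] [IsProbabilityMeasure μ] :
    LipschitzWith 1 fun g : C(M, ℝ) => ∫ y, g y ∂μ := by
  refine LipschitzWith.of_dist_le_mul fun g h => ?_
  rw [dist_eq_norm, ← integral_sub (integrable_continuousMap g) (integrable_continuousMap h)]
  simpa using norm_integral_le_of_norm_le_const (μ := μ)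
    (ae_of_all _ fun y => (dist_eq_norm (g y) (h y)).symm.trans_le
      (ContinuousMap.dist_apply_le_dist y))

theorem isClosed_setOf_tendsto_birkhoffAverage_comp [BorelSpace M] [IsProbabilityMeasure μ]
    {α : Type*} (f : α → α) (π : α → M) (p : α) :
    IsClosed {g : C(M, ℝ) |
      Tendsto (birkhoffAverage ℝ f (g ∘ π) · p) atTop (𝓝 (∫ y, g y ∂μ))} := by
  have hequi : Equicontinuous fun n (g : C(M, ℝ)) => birkhoffAverage ℝ f (g ∘ π) n p :=
    (LipschitzWith.uniformEquicontinuous _ 1 fun n =>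
      LipschitzWith.of_dist_le_mul fun g h => by
        rw [NNReal.coe_one, one_mul]
        exact dist_birkhoffAverage_le_of_forall_dist_le
          (fun y => ContinuousMap.dist_apply_le_dist (f := g) (g := h) (π y)) n p).equicontinuous
  exact hequi.isClosed_setOfPred_tendsto lipschitzWith_integral_continuousMap.continuous

theorem measurableSet_setOf_empConvAlong [BorelSpace M] [IsProbabilityMeasure μ]
    (hΦ : Continuous Φ) :
    MeasurableSet {p : M × (ℕ → ℝ) | empConvAlong Φ p.1 p.2 (fun n => n) μ} := by
  let D := TopologicalSpace.denseSeq C(M, ℝ)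
  have hD : {p : M × (ℕ → ℝ) | empConvAlong Φ p.1 p.2 (fun n => n) μ} = ⋂ i, {p |
      Tendsto (birkhoffAverage ℝ (skewProduct Φ) (D i ∘ Prod.fst) · p) atTop
        (𝓝 (∫ y, D i y ∂μ))} := by
    ext ⟨y, t⟩
    simp only [mem_ofPred_eq, mem_iInter, empConvAlong_iff_tendsto_birkhoffAverage]
    refine ⟨fun h i => h (D i), fun h g => ?_⟩
    have hclosed := isClosed_setOf_tendsto_birkhoffAverage_comp (μ := μ) (skewProduct Φ)
      Prod.fst (y, t)
    exact hclosed.closure_subset_iff.2 (range_subset_iff.2 h)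
      ((TopologicalSpace.denseRange_denseSeq C(M, ℝ)).closure_range ▸ mem_univ g)
  rw [hD]
  refine .iInter fun i => measurableSet_tendsto _ fun n => Continuous.measurable ?_
  unfold birkhoffAverage birkhoffSum
  exact (continuous_finsetSum _ fun k _ => ((D i).continuous.comp continuous_fst).comp
    ((continuous_skewProduct hΦ).iterate k)).const_smul ((n : ℝ)⁻¹)

theorem empConvAlong_of_iterate {x : M} {t : ℕ → ℝ} {nk : ℕ → ℕ}
    (hnk : Tendsto nk atTop atTop) (m : ℕ)
    (h : empConvAlong Φ (rorb Φ x m t) (fun i => t (i + m)) (fun n => n) μ) :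
    empConvAlong Φ x t nk μ := by
  rw [empConvAlong_iff_tendsto_birkhoffAverage] at h ⊢
  intro g
  have hg : Bornology.IsBounded (range (g ∘ Prod.fst : M × (ℕ → ℝ) → ℝ)) :=
    (isCompact_range g.continuous).isBounded.subset (range_comp_subset_range _ _)
  refine (tendsto_birkhoffAverage_of_tendsto_iterate hg m ?_).comp hnk
  rw [skewProduct_iterate]
  exact h g

theorem exists_rorb_mem_of_empConvAlong [BorelSpace M] [IsFiniteMeasure μ] {x : M}
    {t : ℕ → ℝ} {nk : ℕ → ℕ} (hnk : Tendsto nk atTop atTop) {U : Set M} (hU : IsOpen U)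
    (hμU : 0 < μ U) (h : empConvAlong Φ x t nk μ) : ∃ j, rorb Φ x (j + 1) t ∈ U := by
  by_contra! hout
  have hUc : Uᶜ.Nonempty := ⟨_, hout 0⟩
  let g : C(M, ℝ) := ⟨fun y => Metric.infDist y Uᶜ, Metric.continuous_infDist_pt _⟩
  have hpos : 0 < ∫ y, g y ∂μ := by
    refine (integral_pos_iff_support_of_nonneg (f := g) (fun y => Metric.infDist_nonneg)
      (integrable_continuousMap g)).2 ?_
    convert hμU using 2
    ext y
    rw [Function.mem_support, ← not_not (a := y ∈ U), ← mem_compl_iff,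
      hU.isClosed_compl.notMem_iff_infDist_pos hUc]
    exact Metric.infDist_nonneg.lt_iff_ne'.symm
  have hzero : Tendsto
      (fun k => (nk k : ℝ)⁻¹ * ∑ j ∈ Finset.range (nk k), g (rorb Φ x j t))
      atTop (𝓝 0) := by
    have hsum : ∀ n, ∑ j ∈ Finset.range (n + 1), g (rorb Φ x j t) = g x := fun n => by
      rw [Finset.sum_range_succ', Finset.sum_eq_zero fun j _ =>
        show g _ = 0 from Metric.infDist_zero_of_mem (hout j),
        zero_add]
      rfl
    have hev : (fun k => (nk k : ℝ)⁻¹ * g x) =ᶠ[atTop]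
        fun k => (nk k : ℝ)⁻¹ * ∑ j ∈ Finset.range (nk k), g (rorb Φ x j t) := by
      filter_upwards [hnk.eventually_ge_atTop 1] with k hk
      obtain ⟨n, hn⟩ : ∃ n, nk k = n + 1 := ⟨nk k - 1, by omega⟩
      rw [hn, hsum]
    refine Tendsto.congr' hev ?_
    simpa using (tendsto_inv_atTop_zero.comp (tendsto_natCast_atTop_atTop.comp hnk)).mul_const
      (g x)
  exact hpos.ne' (tendsto_nhds_unique (h g) hzero)

end Metric

section Basin

variable {M : Type*} [MetricSpace M] [CompactSpace M] [MeasurableSpace M] [BorelSpace M]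
  {Φ : ℝ → C(M, M)} {θ : Measure ℝ} [IsProbabilityMeasure θ] {μ : Measure M}
  [IsProbabilityMeasure μ] {x : M} {nk : ℕ → ℕ}

theorem ae_empConvAlong_of_rorb_mem_basin (hΦ : Continuous Φ) (hnk : Tendsto nk atTop atTop)
    (m : ℕ) :
    ∀ᵐ t ∂(Measure.infinitePi fun _ => θ),
      rorb Φ x m t ∈ interior (basinM Φ (Measure.infinitePi fun _ => θ) μ) →
        empConvAlong Φ x t nk μ := by
  set P := Measure.infinitePi fun _ : ℕ => θ
  set G := {q : M × (ℕ → ℝ) |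
    q.1 ∈ interior (basinM Φ P μ) → empConvAlong Φ q.1 q.2 (fun n => n) μ}
  have hG : MeasurableSet G :=
    (measurable_fst isOpen_interior.measurableSet).imp (measurableSet_setOf_empConvAlong hΦ)
  have hGprod : ∀ᵐ q ∂(P.map (rorb Φ x m)).prod P, q ∈ G := by
    refine (Measure.ae_prod_iff_ae_ae hG).2 (ae_of_all _ fun y => ?_)
    by_cases hy : y ∈ interior (basinM Φ P μ)
    · have hbasin : ∀ᵐ s ∂P, empConvAlong Φ y s (fun n => n) μ :=
        interior_subset (s := basinM Φ P μ) hy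
      exact hbasin.mono fun s hs _ => hs
    · exact ae_of_all _ fun s h => absurd h hy
  rw [← map_prod_shift_infinitePi (measurable_rorb_piLT hΦ x m)] at hGprod
  have hmeas : Measurable fun t : ℕ → ℝ => (rorb Φ x m t, fun i => t (i + m)) :=
    ((measurable_rorb_piLT hΦ x m).mono (piLT_le m) le_rfl).prodMk
      (measurable_pi_lambda _ fun i => measurable_pi_apply _)
  filter_upwards [ae_of_ae_map hmeas.aemeasurable hGprod] with t ht hmem
  exact empConvAlong_of_iterate hnk m (ht hmem)

theorem ae_empConvAlong_iff_exists_rorb_mem (hΦ : Continuous Φ) {U : Set M} (hU : IsOpen U)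
    (hUbasin : U ⊆ interior (basinM Φ (Measure.infinitePi fun _ => θ) μ)) (hμU : 0 < μ U)
    (hnk : Tendsto nk atTop atTop) :
    ∀ᵐ t ∂(Measure.infinitePi fun _ => θ), empConvAlong Φ x t nk μ ↔
      ∃ j, rorb Φ x (j + 1) t ∈ interior (basinM Φ (Measure.infinitePi fun _ => θ) μ) := by
  filter_upwards [ae_all_iff.2 fun j =>
    ae_empConvAlong_of_rorb_mem_basin (θ := θ) (μ := μ) (x := x) hΦ hnk (j + 1)] with t ht
  exact ⟨fun h => (exists_rorb_mem_of_empConvAlong hnk hU hμU h).imp fun _ hj => hUbasin hj,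
    fun ⟨j, hj⟩ => ht j hj⟩

end Basin

theorem basin_hitting_characterization_general
    {M : Type*} [MetricSpace M] [CompactSpace M]
    [MeasurableSpace M] [BorelSpace M]
    (Φ : ℝ → C(M, M)) (hΦ : Continuous Φ)
    (θ : Measure ℝ) [IsProbabilityMeasure θ]
    (P : Measure (ℕ → ℝ)) [IsProbabilityMeasure P]
    (hP : ∀ n : ℕ, P.map (fun t (i : Fin n) => t (i : ℕ))
      = Measure.pi (fun _ : Fin n => θ))
    (μi : Measure M) [IsProbabilityMeasure μi]
    (hUbasin : interior (msupport μi) ⊆ interior (basinM Φ P μi))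
    (hUpos : 0 < μi (interior (msupport μi)))
    (x : M) (nk : ℕ → ℕ) (hnk : StrictMono nk) :
    P (symmDiff
        {t | t ∈ msupport P ∧ empConvAlong Φ x t nk μi}
        (⋃ j : ℕ,
          {t | t ∈ msupport P ∧
            rorb Φ x (j + 1) t ∈ interior (basinM Φ P μi)})) = 0 ∧
    ∀ mk : ℕ → ℕ, StrictMono mk →
      P (symmDiff
          {t | t ∈ msupport P ∧ empConvAlong Φ x t nk μi}
          {t | t ∈ msupport P ∧ empConvAlong Φ x t mk μi}) = 0 := by
  have hPθ := eq_infinitePi_of_map_fin hP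
  have hW : ∀ mk : ℕ → ℕ, StrictMono mk →
      {t | t ∈ msupport P ∧ empConvAlong Φ x t mk μi} =ᵐ[P] ⋃ j : ℕ,
        {t | t ∈ msupport P ∧ rorb Φ x (j + 1) t ∈ interior (basinM Φ P μi)} := by
    intro mk hmk
    subst hPθ
    refine eventuallyEq_set.2 ?_
    filter_upwards [ae_empConvAlong_iff_exists_rorb_mem (x := x) hΦ isOpen_interior hUbasin
      hUpos hmk.tendsto_atTop] with t ht
    simp only [mem_ofPred_eq, mem_iUnion, ht, exists_and_left]
  exact ⟨measure_symmDiff_eq_zero_iff.2 (hW nk hnk),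
    fun mk hmk => measure_symmDiff_eq_zero_iff.2 ((hW nk hnk).trans (hW mk hmk).symm)⟩

/-- Lemma 4.7: with
`W_i(x) = {t ∈ supp θ^ℕ : empirical measures along (n_k) converge to μ_i}`
and `W_{i,j}(x) = {t ∈ supp θ^ℕ : f_t^j x ∈ int B(μ_i)}`, one has
`W_i(x) = ⋃_{j≥1} W_{i,j}(x)` modulo a `θ^ℕ`-null set; in particular
`W_i(x)` does not depend on the chosen subsequence `(n_k)`. -/
theorem basin_hitting_characterization
    {M : Type*} [MetricSpace M] [CompactSpace M]
    [MeasurableSpace M] [BorelSpace M]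
    (Φ : ℝ → C(M, M)) (hΦ : Continuous Φ)
    (θ : Measure ℝ) [IsProbabilityMeasure θ]
    (P : Measure (ℕ → ℝ)) [IsProbabilityMeasure P]
    (hP : ∀ n : ℕ, P.map (fun t (i : Fin n) => t (i : ℕ))
      = Measure.pi (fun _ : Fin n => θ))
    (μi : Measure M) [IsProbabilityMeasure μi]
    (hstat : ∀ φ : C(M, ℝ),
      ∫ x, φ x ∂μi = ∫ t, ∫ x, φ ((Φ t) x) ∂μi ∂θ)
    (hUne : (interior (msupport μi)).Nonempty)
    (hUbasin : interior (msupport μi) ⊆ interior (basinM Φ P μi))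
    (hUpos : 0 < μi (interior (msupport μi)))
    (x : M) (nk : ℕ → ℕ) (hnk : StrictMono nk) :
    P (symmDiff
        {t | t ∈ msupport P ∧ empConvAlong Φ x t nk μi}
        (⋃ j : ℕ,
          {t | t ∈ msupport P ∧
            rorb Φ x (j + 1) t ∈ interior (basinM Φ P μi)})) = 0 ∧
    ∀ mk : ℕ → ℕ, StrictMono mk →
      P (symmDiff
          {t | t ∈ msupport P ∧ empConvAlong Φ x t nk μi}
          {t | t ∈ msupport P ∧ empConvAlong Φ x t mk μi}) = 0 :=
  basin_hitting_characterization_general Φ hΦ θ P hP μi hUbasin hUpos x nk hnk
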